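/- Let x₀ ∈ ℝ² and let U ⊂ ℝ² be a bounded open set that is centrally symmetric about x₀, i.e. 2x₀ − U = U. Let w : ℝ² → ℝ be measurable with 0 < c₁ ≤ w ≤ c₂ a.e. and w(2x₀ − x) = w(x) for a.e. x ∈ U. Let S₁ : ℝ² → ℂ be continuously differentiable on a neighborhood of the closure of U, and define S₂(x) = conj(S₁(2x₀ − x)). Then the following identity holds between vectors in ℂ²: ∫_U w(x)^{-1} (∇S₂)(x) · conj(S₁(x)) dx = − ∫_U w(x)^{-1} S₂(x) · conj((∇S₁)(x)) dx. -/

import Mathlib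

open MeasureTheory Complex

theorem parity_conjugation_gradient_identity (x₀ : ℝ × ℝ) (U : Set (ℝ × ℝ))
    (hUopen : IsOpen U) (hUbdd : Bornology.IsBounded U)
    (hUsym : (fun x => (2 : ℝ) • x₀ - x) '' U = U)
    (w : ℝ × ℝ → ℝ) (hw : Measurable w)
    (c₁ c₂ : ℝ) (hc₁ : 0 < c₁) (hbd : ∀ᵐ x : ℝ × ℝ, c₁ ≤ w x ∧ w x ≤ c₂)
    (hwsym : ∀ᵐ x ∂(volume.restrict U), w ((2 : ℝ) • x₀ - x) = w x)
    (S₁ : ℝ × ℝ → ℂ)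
    (hS₁ : ∃ V : Set (ℝ × ℝ), IsOpen V ∧ closure U ⊆ V ∧ ContDiffOn ℝ 1 S₁ V)
    (S₂ : ℝ × ℝ → ℂ)
    (hS₂ : ∀ x, S₂ x = starRingEnd ℂ (S₁ ((2 : ℝ) • x₀ - x))) :
    (∫ x in U, (w x : ℂ)⁻¹ * (fderiv ℝ S₂ x (1, 0) * starRingEnd ℂ (S₁ x))) =
        -∫ x in U, (w x : ℂ)⁻¹ * (S₂ x * starRingEnd ℂ (fderiv ℝ S₁ x (1, 0))) ∧
      (∫ x in U, (w x : ℂ)⁻¹ * (fderiv ℝ S₂ x (0, 1) * starRingEnd ℂ (S₁ x))) =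
        -∫ x in U, (w x : ℂ)⁻¹ * (S₂ x * starRingEnd ℂ (fderiv ℝ S₁ x (0, 1))) := by
  obtain ⟨V, hVopen, hUV, hC⟩ := hS₁
  set σ : ℝ × ℝ → ℝ × ℝ := fun x => (2 : ℝ) • x₀ - x with hσdef
  have hinv : ∀ x, σ (σ x) = x := by
    intro x; simp only [σ]; abel
  have hmem : ∀ x ∈ U, σ x ∈ U := by
    intro x hx
    have : σ x ∈ (fun x => (2 : ℝ) • x₀ - x) '' U := ⟨x, hx, rfl⟩
    rwa [hUsym] at this
  have hdiff : ∀ x ∈ U, DifferentiableAt ℝ S₁ x := by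
    intro x hx
    have hxV : x ∈ V := hUV (subset_closure hx)
    exact ((hC.differentiableOn one_ne_zero) x hxV).differentiableAt (hVopen.mem_nhds hxV)
  -- derivative of S₂
  have hfd : ∀ x ∈ U, ∀ v : ℝ × ℝ,
      fderiv ℝ S₂ x v = -(starRingEnd ℂ) (fderiv ℝ S₁ (σ x) v) := by
    intro x hx v
    have h1 : HasFDerivAt σ (-(ContinuousLinearMap.id ℝ (ℝ × ℝ))) x :=
      (hasFDerivAt_id x).const_sub _
    have h2 : HasFDerivAt S₁ (fderiv ℝ S₁ (σ x)) (σ x) :=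
      (hdiff _ (hmem x hx)).hasFDerivAt
    have h3 : HasFDerivAt (⇑(starRingEnd ℂ))
        (Complex.conjCLE.toContinuousLinearMap) (S₁ (σ x)) :=
      Complex.conjCLE.hasFDerivAt
    have h4 : HasFDerivAt S₂
        ((Complex.conjCLE.toContinuousLinearMap).comp
          ((fderiv ℝ S₁ (σ x)).comp (-(ContinuousLinearMap.id ℝ (ℝ × ℝ))))) x := by
      have : S₂ = fun y => (starRingEnd ℂ) (S₁ (σ y)) := funext hS₂
      rw [this]
      exact h3.comp x (h2.comp x h1)
    rw [h4.fderiv]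
    simp [ContinuousLinearMap.comp_apply, map_neg]
  have hS₂σ : ∀ x, S₂ (σ x) = (starRingEnd ℂ) (S₁ x) := by
    intro x
    rw [hS₂]
    exact congrArg _ (congrArg S₁ (hinv x))
  -- change of variables
  have hmp : MeasurePreserving σ (volume : Measure (ℝ × ℝ)) volume :=
    Measure.measurePreserving_sub_left volume ((2 : ℝ) • x₀)
  have hemb : MeasurableEmbedding σ :=
    (Homeomorph.subLeft ((2 : ℝ) • x₀)).measurableEmbedding
  have hpre : σ ⁻¹' U = U := by
    ext x
    constructor
    · intro hx
      have := hmem _ hx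
      rwa [hinv] at this
    · intro hx; exact hmem x hx
  have key : ∀ v : ℝ × ℝ,
      (∫ x in U, (w x : ℂ)⁻¹ * (fderiv ℝ S₂ x v * starRingEnd ℂ (S₁ x))) =
        -∫ x in U, (w x : ℂ)⁻¹ * (S₂ x * starRingEnd ℂ (fderiv ℝ S₁ x v)) := by
    intro v
    set g : ℝ × ℝ → ℂ := fun y => (w y : ℂ)⁻¹ * (S₂ y * starRingEnd ℂ (fderiv ℝ S₁ y v))
      with hg
    have step1 : (∫ x in U, (w x : ℂ)⁻¹ * (fderiv ℝ S₂ x v * starRingEnd ℂ (S₁ x)))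
        = ∫ x in U, -(g (σ x)) := by
      refine integral_congr_ae ?_
      filter_upwards [hwsym, ae_restrict_mem hUopen.measurableSet] with x hwx hx
      have h1 := hfd x hx v
      have h2 := hS₂σ x
      simp only [hg]
      rw [h1, h2, hwx]
      ring
    rw [step1, integral_neg]
    congr 1
    calc ∫ x in U, g (σ x) = ∫ x in σ ⁻¹' U, g (σ x) := by rw [hpre]
      _ = ∫ y in U, g y := hmp.setIntegral_preimage_emb hemb g U
  exact ⟨key (1, 0), key (0, 1)⟩
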